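/- The class of pattern languages over a countably infinite name alphabet N is closed under concatenation: for pattern languages L(k₁, φ₁) and L(k₂, φ₂), the concatenation { u ++ v | u ∈ L(k₁, φ₁), v ∈ L(k₂, φ₂) } equals the pattern language L(k₁ + k₂, ψ), where ψ is the conjunction of φ₁ applied to the first k₁ positions and φ₂ applied (with indices shifted by k₁) to the last k₂ positions. (This is the core correctness fact behind the language-calculus rule for concatenation of schematic words.) -/

import Mathlib

/-- Freshness conditions over `k` positions with names from `N`: finite
conjunctions (`tru` is the empty conjunction) and disjunctions of atomic
constraints `x i ≠ x j` and `x i ≠ n`. -/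
inductive Fresh (N : Type) (k : ℕ) : Type where
  | tru : Fresh N k
  | neVar : Fin k → Fin k → Fresh N k
  | neConst : Fin k → N → Fresh N k
  | and : Fresh N k → Fresh N k → Fresh N k
  | or : Fresh N k → Fresh N k → Fresh N k

/-- Satisfaction of a freshness condition by an assignment of names. -/
def Fresh.sat {N : Type} {k : ℕ} : Fresh N k → (Fin k → N) → Prop
  | .tru, _ => True
  | .neVar i j, x => x i ≠ x j
  | .neConst i n, x => x i ≠ n
  | .and φ ψ, x => φ.sat x ∧ ψ.sat x
  | .or φ ψ, x => φ.sat x ∨ ψ.sat x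

/-- Reindexing a freshness condition along a map of positions. -/
def Fresh.reindex {N : Type} {k m : ℕ} (f : Fin k → Fin m) : Fresh N k → Fresh N m
  | .tru => .tru
  | .neVar i j => .neVar (f i) (f j)
  | .neConst i n => .neConst (f i) n
  | .and φ ψ => .and (φ.reindex f) (ψ.reindex f)
  | .or φ ψ => .or (φ.reindex f) (ψ.reindex f)

/-- The pattern language of a freshness condition: all words of length `k`
whose entries satisfy `φ`. -/
def patLang {N : Type} (k : ℕ) (φ : Fresh N k) : Set (List N) :=
  { w | ∃ x : Fin k → N, w = List.ofFn x ∧ φ.sat x }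

namespace Fresh

variable {N : Type}

theorem sat_reindex {k m : ℕ} (f : Fin k → Fin m) (φ : Fresh N k) (x : Fin m → N) :
    (φ.reindex f).sat x ↔ φ.sat (x ∘ f) := by
  induction φ with
  | tru | neVar | neConst => rfl
  | and _ _ ih₁ ih₂ => exact and_congr ih₁ ih₂
  | or _ _ ih₁ ih₂ => exact or_congr ih₁ ih₂

theorem sat_reindex_append {k₁ k₂ : ℕ} (φ₁ : Fresh N k₁) (φ₂ : Fresh N k₂)
    (x₁ : Fin k₁ → N) (x₂ : Fin k₂ → N) :
    (Fresh.and (φ₁.reindex (Fin.castAdd k₂)) (φ₂.reindex (Fin.natAdd k₁))).sat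
        (Fin.append x₁ x₂) ↔ φ₁.sat x₁ ∧ φ₂.sat x₂ := by
  have hleft : Fin.append x₁ x₂ ∘ Fin.castAdd k₂ = x₁ := funext (Fin.append_left x₁ x₂)
  have hright : Fin.append x₁ x₂ ∘ Fin.natAdd k₁ = x₂ := funext (Fin.append_right x₁ x₂)
  rw [sat, sat_reindex, sat_reindex, hleft, hright]

end Fresh

theorem patLang_concat_general {N : Type}
    (k₁ k₂ : ℕ) (φ₁ : Fresh N k₁) (φ₂ : Fresh N k₂) :
    { w | ∃ u ∈ patLang k₁ φ₁, ∃ v ∈ patLang k₂ φ₂, w = u ++ v } =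
      patLang (k₁ + k₂)
        (.and (φ₁.reindex (Fin.castAdd k₂)) (φ₂.reindex (Fin.natAdd k₁))) := by
  ext w
  constructor
  · rintro ⟨_, ⟨x₁, rfl, h₁⟩, _, ⟨x₂, rfl, h₂⟩, rfl⟩
    exact ⟨Fin.append x₁ x₂, (List.ofFn_fin_append x₁ x₂).symm,
      (Fresh.sat_reindex_append φ₁ φ₂ x₁ x₂).2 ⟨h₁, h₂⟩⟩
  · rintro ⟨x, rfl, h⟩
    obtain ⟨x₁, x₂, rfl⟩ : ∃ x₁ x₂, x = Fin.append x₁ x₂ :=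
      ⟨_, _, Fin.append_castAdd_natAdd.symm⟩
    obtain ⟨h₁, h₂⟩ := (Fresh.sat_reindex_append φ₁ φ₂ x₁ x₂).1 h
    exact ⟨_, ⟨x₁, rfl, h₁⟩, _, ⟨x₂, rfl, h₂⟩, List.ofFn_fin_append x₁ x₂⟩

theorem patLang_concat {N : Type} [Countable N] [Infinite N]
    (k₁ k₂ : ℕ) (φ₁ : Fresh N k₁) (φ₂ : Fresh N k₂) :
    { w | ∃ u ∈ patLang k₁ φ₁, ∃ v ∈ patLang k₂ φ₂, w = u ++ v } =
      patLang (k₁ + k₂)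
        (.and (φ₁.reindex (Fin.castAdd k₂)) (φ₂.reindex (Fin.natAdd k₁))) :=
  patLang_concat_general k₁ k₂ φ₁ φ₂
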